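/- arXiv:2003.09749 — 3 statements merged into one kernel-verified Lean document; each statement's English description precedes it below -/
import Mathlib

section
/- Let X be a normed space, (α_n) a strictly increasing sequence of non-negative reals, and f : [T,∞) → X. If there exist polynomials f_1,...,f_N : ℝ → X and ε_N > 0 such that ‖f(t) − Σ_{n=1}^N f_n(t) e^{−α_n t}‖ = O(e^{−(α_N+ε_N)t}) as t → ∞, then the polynomials f_1,...,f_N are uniquely determined by f. -/
open Filter Topology

set_option maxHeartbeats 1000000

/-- `f : ℝ → X` is a polynomial function with coefficients in `X`. -/
def IsPolyFun {X : Type*} [AddCommMonoid X] [Module ℝ X] (f : ℝ → X) : Prop :=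
  ∃ (d : ℕ) (a : ℕ → X), ∀ t : ℝ, f t = ∑ k ∈ Finset.range (d + 1), t ^ k • a k

lemma aux_pow_exp (k : ℕ) {c : ℝ} (hc : 0 < c) :
    Tendsto (fun t : ℝ => t ^ k * Real.exp (-c * t)) atTop (𝓝 0) := by
  simpa [Real.rpow_natCast] using tendsto_rpow_mul_exp_neg_mul_atTop_nhds_zero k c hc

lemma poly_coeff_zero {X : Type*} [NormedAddCommGroup X] [NormedSpace ℝ X] :
    ∀ (d : ℕ) (a : ℕ → X),
      Tendsto (fun t : ℝ => ∑ k ∈ Finset.range (d + 1), t ^ k • a k) atTop (𝓝 0) →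
      ∀ k ≤ d, a k = 0 := by
  intro d
  induction d with
  | zero =>
    intro a h k hk
    interval_cases k
    have h2 : Tendsto (fun _ : ℝ => a 0) atTop (𝓝 (a 0)) := tendsto_const_nhds
    have heq : (fun t : ℝ => ∑ k ∈ Finset.range 1, t ^ k • a k) = fun _ => a 0 := by
      funext t; simp
    rw [heq] at h
    exact tendsto_nhds_unique h2 h
  | succ d ih =>
    intro a h k hk
    -- the top coefficient vanishes
    have htop : a (d + 1) = 0 := by
      have hg0 : Tendsto
          (fun t : ℝ => (t ^ (d + 1))⁻¹ • ∑ k ∈ Finset.range (d + 2), t ^ k • a k)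
          atTop (𝓝 0) := by
        have hnorm : Tendsto (fun t : ℝ => ‖∑ k ∈ Finset.range (d + 2), t ^ k • a k‖)
            atTop (𝓝 0) := by simpa using h.norm
        refine squeeze_zero_norm' ?_ hnorm
        filter_upwards [eventually_ge_atTop (1 : ℝ)] with t ht
        have h1 : (1 : ℝ) ≤ t ^ (d + 1) := one_le_pow₀ ht
        rw [norm_smul, norm_inv, Real.norm_eq_abs,
          abs_of_nonneg (by positivity : (0:ℝ) ≤ t ^ (d+1))]
        have hle : (t ^ (d+1))⁻¹ ≤ 1 := inv_le_one_of_one_le₀ h1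
        have hnn : (0:ℝ) ≤ ‖∑ k ∈ Finset.range (d + 2), t ^ k • a k‖ := norm_nonneg _
        nlinarith
      have hsum : Tendsto (fun t : ℝ =>
          ∑ k ∈ Finset.range (d + 1), (t ^ k * (t ^ (d + 1))⁻¹) • a k) atTop (𝓝 0) := by
        have h2 : Tendsto (fun t : ℝ =>
            ∑ k ∈ Finset.range (d + 1), (t ^ k * (t ^ (d + 1))⁻¹) • a k) atTop
            (𝓝 (∑ k ∈ Finset.range (d + 1), (0:ℝ) • a k)) := by
          refine tendsto_finset_sum _ fun k hk => Tendsto.smul_const ?_ (a k)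
          have hkd : k ≤ d := Nat.lt_succ_iff.mp (Finset.mem_range.mp hk)
          have ht0 : Tendsto (fun t : ℝ => (t ^ (d + 1 - k))⁻¹) atTop (𝓝 0) :=
            (tendsto_pow_atTop (by omega)).inv_tendsto_atTop
          refine ht0.congr' ?_
          filter_upwards [eventually_gt_atTop (0 : ℝ)] with t ht
          have hsplit : t ^ (d + 1) = t ^ k * t ^ (d + 1 - k) := by
            rw [← pow_add]; congr 1; omega
          rw [hsplit, mul_inv, ← mul_assoc, mul_inv_cancel₀ (pow_ne_zero _ ht.ne'), one_mul]
        simpa using h2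
      have hgeq : ∀ᶠ t : ℝ in atTop,
          (t ^ (d + 1))⁻¹ • ∑ k ∈ Finset.range (d + 2), t ^ k • a k =
          a (d + 1) + ∑ k ∈ Finset.range (d + 1), (t ^ k * (t ^ (d + 1))⁻¹) • a k := by
        filter_upwards [eventually_gt_atTop (0 : ℝ)] with t ht
        rw [Finset.sum_range_succ, smul_add, smul_smul,
          inv_mul_cancel₀ (pow_ne_zero _ ht.ne'), one_smul, Finset.smul_sum, add_comm]
        congr 1
        refine Finset.sum_congr rfl fun k _ => ?_
        rw [smul_smul, mul_comm]
      have hconst : Tendsto (fun _ : ℝ => a (d + 1)) atTop (𝓝 (a (d + 1))) :=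
        tendsto_const_nhds
      have hg1 : Tendsto
          (fun t : ℝ => (t ^ (d + 1))⁻¹ • ∑ k ∈ Finset.range (d + 2), t ^ k • a k)
          atTop (𝓝 (a (d + 1))) := by
        have h3 := hconst.add hsum
        rw [add_zero] at h3
        exact h3.congr' (hgeq.mono fun t h => h.symm)
      exact tendsto_nhds_unique hg1 hg0
    rcases Nat.lt_succ_iff_lt_or_eq.mp (Nat.lt_succ_of_le hk) with hk' | hk'
    · have h' : Tendsto (fun t : ℝ => ∑ k ∈ Finset.range (d + 1), t ^ k • a k)
          atTop (𝓝 0) := by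
        refine h.congr fun t => ?_
        rw [Finset.sum_range_succ, htop, smul_zero, add_zero]
      exact ih a h' k (Nat.lt_succ_iff.mp hk')
    · rw [hk']; exact htop

lemma exp_smul_poly_tendsto {X : Type*} [NormedAddCommGroup X] [NormedSpace ℝ X]
    {p : ℝ → X} (hp : IsPolyFun p) {c : ℝ} (hc : 0 < c) :
    Tendsto (fun t => Real.exp (-c * t) • p t) atTop (𝓝 0) := by
  obtain ⟨d, a, ha⟩ := hp
  have heq : ∀ t : ℝ, Real.exp (-c * t) • p t =
      ∑ k ∈ Finset.range (d + 1), (t ^ k * Real.exp (-c * t)) • a k := by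
    intro t
    rw [ha, Finset.smul_sum]
    exact Finset.sum_congr rfl fun k _ => by rw [smul_smul, mul_comm]
  have h2 : Tendsto (fun t : ℝ =>
      ∑ k ∈ Finset.range (d + 1), (t ^ k * Real.exp (-c * t)) • a k) atTop
      (𝓝 (∑ k ∈ Finset.range (d + 1), (0:ℝ) • a k)) :=
    tendsto_finset_sum _ fun k _ => (aux_pow_exp k hc).smul_const (a k)
  simp only [zero_smul, Finset.sum_const_zero] at h2
  exact h2.congr fun t => (heq t).symm

lemma isPolyFun_sub {X : Type*} [AddCommGroup X] [Module ℝ X] {f g : ℝ → X}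
    (hf : IsPolyFun f) (hg : IsPolyFun g) : IsPolyFun (fun t => f t - g t) := by
  obtain ⟨d1, a, ha⟩ := hf
  obtain ⟨d2, b, hb⟩ := hg
  have ext : ∀ (d : ℕ) (c : ℕ → X), d ≤ max d1 d2 → ∀ t : ℝ,
      ∑ k ∈ Finset.range (d + 1), t ^ k • c k =
      ∑ k ∈ Finset.range (max d1 d2 + 1), t ^ k • (if k ≤ d then c k else 0) := by
    intro d c hd t
    rw [show ∑ k ∈ Finset.range (d + 1), t ^ k • c k
        = ∑ k ∈ Finset.range (d + 1), t ^ k • (if k ≤ d then c k else 0) from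
      Finset.sum_congr rfl fun k hk => by
        rw [if_pos (Nat.lt_succ_iff.mp (Finset.mem_range.mp hk))]]
    refine Finset.sum_subset (Finset.range_subset_range.mpr (Nat.succ_le_succ hd)) ?_
    intro k _ hk
    have hk' : ¬ k ≤ d := fun h => hk (Finset.mem_range.mpr (Nat.lt_succ_of_le h))
    rw [if_neg hk', smul_zero]
  refine ⟨max d1 d2, fun k => (if k ≤ d1 then a k else 0) - (if k ≤ d2 then b k else 0), ?_⟩
  intro t
  show f t - g t = _
  rw [ha, hb, ext d1 a (le_max_left _ _) t, ext d2 b (le_max_right _ _) t,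
    ← Finset.sum_sub_distrib]
  exact Finset.sum_congr rfl fun k _ => (smul_sub _ _ _).symm

/-- Uniqueness of the polynomials in a finite asymptotic expansion
`f(t) ≈ ∑_{n=1}^N f_n(t) e^{-α_n t}` with error `O(e^{-(α_N+ε)t})`. -/
theorem expansion_polynomials_unique
    {X : Type*} [NormedAddCommGroup X] [NormedSpace ℝ X]
    (N : ℕ) (hN : 1 ≤ N) (α : ℕ → ℝ) (hα : StrictMono α) (hα0 : ∀ n, 0 ≤ α n)
    (T : ℝ) (f : ℝ → X) (F G : ℕ → ℝ → X)
    (hF : ∀ n ∈ Finset.Icc 1 N, IsPolyFun (F n))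
    (hG : ∀ n ∈ Finset.Icc 1 N, IsPolyFun (G n))
    (εF εG : ℝ) (hεF : 0 < εF) (hεG : 0 < εG)
    (hbF : ∃ C T', T ≤ T' ∧ ∀ t ≥ T',
      ‖f t - ∑ n ∈ Finset.Icc 1 N, Real.exp (-(α n) * t) • F n t‖
        ≤ C * Real.exp (-(α N + εF) * t))
    (hbG : ∃ C T', T ≤ T' ∧ ∀ t ≥ T',
      ‖f t - ∑ n ∈ Finset.Icc 1 N, Real.exp (-(α n) * t) • G n t‖
        ≤ C * Real.exp (-(α N + εG) * t)) :
    ∀ n ∈ Finset.Icc 1 N, ∀ t : ℝ, F n t = G n t := by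
  obtain ⟨C1, T1, hT1, hb1⟩ := hbF
  obtain ⟨C2, T2, hT2, hb2⟩ := hbG
  set ε : ℝ := min εF εG with hε
  have hε0 : 0 < ε := lt_min hεF hεG
  set C : ℝ := |C1| + |C2| with hC
  set T0 : ℝ := max (max T1 T2) 0 with hT0
  set S : ℝ → X := fun t => ∑ n ∈ Finset.Icc 1 N,
    Real.exp (-(α n) * t) • (F n t - G n t) with hSdef
  have hS : ∀ t ≥ T0, ‖S t‖ ≤ C * Real.exp (-(α N + ε) * t) := by
    intro t ht
    have ht1 : T1 ≤ t := le_trans (le_max_left _ _) (le_trans (le_max_left _ _) ht)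
    have ht2 : T2 ≤ t := le_trans (le_max_right _ _) (le_trans (le_max_left _ _) ht)
    have ht0 : (0:ℝ) ≤ t := le_trans (le_max_right _ _) ht
    have hSeq : S t = (f t - ∑ n ∈ Finset.Icc 1 N, Real.exp (-(α n) * t) • G n t)
        - (f t - ∑ n ∈ Finset.Icc 1 N, Real.exp (-(α n) * t) • F n t) := by
      simp only [hSdef]
      rw [sub_sub_sub_cancel_left, ← Finset.sum_sub_distrib]
      exact Finset.sum_congr rfl fun n _ => smul_sub _ _ _
    have key : ∀ (ε' : ℝ), ε ≤ ε' → Real.exp (-(α N + ε') * t) ≤ Real.exp (-(α N + ε) * t) :=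
      fun ε' hε' => Real.exp_le_exp.mpr (by nlinarith)
    have b2 : C2 * Real.exp (-(α N + εG) * t) ≤ |C2| * Real.exp (-(α N + ε) * t) := by
      have h1 : C2 * Real.exp (-(α N + εG) * t) ≤ |C2| * Real.exp (-(α N + εG) * t) :=
        mul_le_mul_of_nonneg_right (le_abs_self _) (Real.exp_pos _).le
      have h2 : |C2| * Real.exp (-(α N + εG) * t) ≤ |C2| * Real.exp (-(α N + ε) * t) :=
        mul_le_mul_of_nonneg_left (key εG (min_le_right _ _)) (abs_nonneg _)
      linarith
    have b1 : C1 * Real.exp (-(α N + εF) * t) ≤ |C1| * Real.exp (-(α N + ε) * t) := by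
      have h1 : C1 * Real.exp (-(α N + εF) * t) ≤ |C1| * Real.exp (-(α N + εF) * t) :=
        mul_le_mul_of_nonneg_right (le_abs_self _) (Real.exp_pos _).le
      have h2 : |C1| * Real.exp (-(α N + εF) * t) ≤ |C1| * Real.exp (-(α N + ε) * t) :=
        mul_le_mul_of_nonneg_left (key εF (min_le_left _ _)) (abs_nonneg _)
      linarith
    calc ‖S t‖ ≤ ‖f t - ∑ n ∈ Finset.Icc 1 N, Real.exp (-(α n) * t) • G n t‖ +
          ‖f t - ∑ n ∈ Finset.Icc 1 N, Real.exp (-(α n) * t) • F n t‖ := by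
          rw [hSeq]; exact norm_sub_le _ _
      _ ≤ C2 * Real.exp (-(α N + εG) * t) + C1 * Real.exp (-(α N + εF) * t) :=
          add_le_add (hb2 t ht2) (hb1 t ht1)
      _ ≤ |C2| * Real.exp (-(α N + ε) * t) + |C1| * Real.exp (-(α N + ε) * t) := by linarith
      _ = C * Real.exp (-(α N + ε) * t) := by rw [hC]; ring
  have main : ∀ m, m ∈ Finset.Icc 1 N → ∀ t : ℝ, F m t - G m t = 0 := by
    intro m
    induction m using Nat.strong_induction_on with
    | _ m ih =>
      intro hm
      obtain ⟨hm1, hmN⟩ := Finset.mem_Icc.mp hm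
      -- rewrite S as a sum over Icc m N
      have hSm : ∀ t, S t = ∑ n ∈ Finset.Icc m N,
          Real.exp (-(α n) * t) • (F n t - G n t) := by
        intro t
        simp only [hSdef]
        refine (Finset.sum_subset (Finset.Icc_subset_Icc_left hm1) ?_).symm
        intro n hn hn'
        obtain ⟨h1, h2⟩ := Finset.mem_Icc.mp hn
        have hnm : n < m := by
          by_contra hcon
          exact hn' (Finset.mem_Icc.mpr ⟨le_of_not_gt hcon, h2⟩)
        rw [ih n hnm (Finset.mem_Icc.mpr ⟨h1, h2⟩) t, smul_zero]
      have htend0 : Tendsto (fun t => Real.exp (α m * t) • S t) atTop (𝓝 0) := by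
        have hrhs : Tendsto (fun t : ℝ => C * Real.exp (-(α N + ε - α m) * t)) atTop (𝓝 0) := by
          have h4 := (aux_pow_exp 0 (c := α N + ε - α m)
            (by have := hα.monotone hmN; linarith)).const_mul C
          simpa using h4
        refine squeeze_zero_norm' ?_ hrhs
        filter_upwards [eventually_ge_atTop T0] with t ht
        rw [norm_smul, Real.norm_eq_abs, abs_of_pos (Real.exp_pos _)]
        calc Real.exp (α m * t) * ‖S t‖
            ≤ Real.exp (α m * t) * (C * Real.exp (-(α N + ε) * t)) :=
              mul_le_mul_of_nonneg_left (hS t ht) (Real.exp_pos _).le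
          _ = C * Real.exp (-(α N + ε - α m) * t) := by
              rw [mul_comm (Real.exp (α m * t)), mul_assoc, ← Real.exp_add]
              congr 2
              ring
      have hh : ∀ t, Real.exp (α m * t) • S t = (F m t - G m t) + ∑ n ∈ Finset.Ioc m N,
          Real.exp ((α m - α n) * t) • (F n t - G n t) := by
        intro t
        rw [hSm t, Finset.smul_sum]
        have hsplit : ∀ n, Real.exp (α m * t) • (Real.exp (-(α n) * t) • (F n t - G n t))
            = Real.exp ((α m - α n) * t) • (F n t - G n t) := by
          intro n
          rw [smul_smul, ← Real.exp_add]
          ring_nf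
        simp only [hsplit]
        have hmem : m ∈ Finset.Icc m N := Finset.mem_Icc.mpr ⟨le_refl m, hmN⟩
        rw [← Finset.add_sum_erase _ _ hmem, Finset.Icc_erase_left]
        congr 1
        rw [sub_self, zero_mul, Real.exp_zero, one_smul]
      have htail : Tendsto (fun t => ∑ n ∈ Finset.Ioc m N,
          Real.exp ((α m - α n) * t) • (F n t - G n t)) atTop (𝓝 0) := by
        have h2 : Tendsto (fun t : ℝ => ∑ n ∈ Finset.Ioc m N,
            Real.exp ((α m - α n) * t) • (F n t - G n t)) atTop
            (𝓝 (∑ _n ∈ Finset.Ioc m N, (0:X))) := by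
          refine tendsto_finset_sum _ fun n hn => ?_
          obtain ⟨hmn, hnN⟩ := Finset.mem_Ioc.mp hn
          have hnIcc : n ∈ Finset.Icc 1 N := Finset.mem_Icc.mpr ⟨le_trans hm1 hmn.le, hnN⟩
          have hpoly : IsPolyFun (fun t => F n t - G n t) :=
            isPolyFun_sub (hF n hnIcc) (hG n hnIcc)
          have hc : 0 < α n - α m := sub_pos.mpr (hα hmn)
          have h5 := exp_smul_poly_tendsto hpoly hc
          refine h5.congr fun t => ?_
          congr 2
          ring
        simpa using h2
      have hDtend : Tendsto (fun t => F m t - G m t) atTop (𝓝 0) := by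
        have h6 := htend0.sub htail
        rw [sub_zero] at h6
        refine h6.congr fun t => ?_
        rw [hh t]; abel
      have hpolyD : IsPolyFun (fun t => F m t - G m t) :=
        isPolyFun_sub (hF m hm) (hG m hm)
      obtain ⟨d, a, ha⟩ := hpolyD
      have hzero := poly_coeff_zero d a (hDtend.congr fun t => ha t)
      intro t
      rw [show F m t - G m t = ∑ k ∈ Finset.range (d+1), t ^ k • a k from ha t]
      refine Finset.sum_eq_zero fun k hk => ?_
      rw [hzero k (Nat.lt_succ_iff.mp (Finset.mem_range.mp hk)), smul_zero]
  intro n hn t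
  exact sub_eq_zero.mp (main n hn t)
end

section
/- Let γ > 0, t* ≥ 0, X a Banach space, p : ℝ → X a polynomial, and g ∈ C([t*,∞), X) with ‖g(t)‖ ≤ M e^{−δt} for all t ≥ t* (M, δ > 0). If y ∈ C([t*,∞),X) ∩ C¹((t*,∞),X) solves y'(t) − γ y(t) = p(t) + g(t) for t > t* and satisfies e^{−γt}‖y(t)‖ → 0 as t → ∞, then there exists a unique polynomial q : ℝ → X such that ‖y(t) − q(t)‖ ≤ (M/(γ+δ)) e^{−δt} for all t ≥ t*. -/
open Filter Real Finset

lemma coeff_zero_of_tendsto {X : Type*} [NormedAddCommGroup X] [NormedSpace ℝ X]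
    (n : ℕ) (c : ℕ → X)
    (h : Tendsto (fun t : ℝ => ∑ k ∈ Finset.range n, t ^ k • c k) atTop (nhds 0)) :
    ∀ k < n, c k = 0 := by
  induction n with
  | zero => intro k hk; omega
  | succ n ih =>
    have hlim : Tendsto (fun t : ℝ => (t ^ n)⁻¹ • ∑ k ∈ Finset.range (n+1), t ^ k • c k)
        atTop (nhds (c n)) := by
      have heq : ∀ᶠ t : ℝ in atTop, (t ^ n)⁻¹ • ∑ k ∈ Finset.range (n+1), t ^ k • c k
          = ∑ k ∈ Finset.range (n+1), (t ^ ((k : ℤ) - n)) • c k := by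
        filter_upwards [eventually_gt_atTop (0:ℝ)] with t ht
        rw [Finset.smul_sum]
        refine Finset.sum_congr rfl fun k _ => ?_
        rw [smul_smul, zpow_sub₀ (ne_of_gt ht)]
        norm_num [div_eq_inv_mul, mul_comm]
      have hsum : Tendsto (fun t : ℝ => ∑ k ∈ Finset.range (n+1), (t ^ ((k : ℤ) - n)) • c k)
          atTop (nhds (∑ k ∈ Finset.range (n+1), if k = n then c n else 0)) := by
        refine tendsto_finset_sum _ fun k hk => ?_
        rcases eq_or_lt_of_le (Nat.lt_succ_iff.mp (Finset.mem_range.mp hk)) with hkn | hkn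
        · subst hkn
          simp only [if_pos rfl, sub_self]
          simpa using (tendsto_const_nhds (x := c n) (f := atTop (α := ℝ)))
        · rw [if_neg (by omega)]
          simpa using (tendsto_zpow_atTop_zero (𝕜 := ℝ) (by omega : ((k:ℤ) - (n:ℤ)) < 0)).smul_const (c k)
      rw [Finset.sum_ite_eq' (Finset.range (n+1)) n (fun _ => c n)] at hsum
      simp only [Finset.mem_range, Nat.lt_succ_self, if_pos] at hsum
      exact (tendsto_congr' heq).mpr hsum
    have hzero : Tendsto (fun t : ℝ => (t ^ n)⁻¹ • ∑ k ∈ Finset.range (n+1), t ^ k • c k)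
        atTop (nhds 0) := by
      rcases Nat.eq_zero_or_pos n with hn | hn
      · subst hn; simpa using h
      · have h1 : Tendsto (fun t : ℝ => (t ^ n)⁻¹) atTop (nhds (0:ℝ)) := by
          exact (tendsto_pow_atTop (by omega : n ≠ 0) : Tendsto (fun x : ℝ => x ^ n) atTop atTop).inv_tendsto_atTop
        simpa using h1.smul h
    have hcn : c n = 0 := tendsto_nhds_unique hlim hzero
    have h' : Tendsto (fun t : ℝ => ∑ k ∈ Finset.range n, t ^ k • c k) atTop (nhds 0) := by
      refine h.congr fun t => ?_
      rw [Finset.sum_range_succ, hcn, smul_zero, add_zero]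
    intro k hk
    rcases Nat.lt_succ_iff_lt_or_eq.mp hk with hk' | hk'
    · exact ih h' k hk'
    · subst hk'; exact hcn

lemma tendsto_exp_smul_poly {X : Type*} [NormedAddCommGroup X] [NormedSpace ℝ X]
    (γ : ℝ) (hγ : 0 < γ) (n : ℕ) (b : ℕ → X) :
    Tendsto (fun t : ℝ => Real.exp (-γ * t) • ∑ k ∈ Finset.range n, t ^ k • b k)
      atTop (nhds 0) := by
  have : Tendsto (fun t : ℝ => ∑ k ∈ Finset.range n, (Real.exp (-γ * t) * t ^ k) • b k)
      atTop (nhds (∑ k ∈ Finset.range n, (0:X))) := by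
    refine tendsto_finset_sum _ fun k _ => ?_
    have h1 : Tendsto (fun t : ℝ => t ^ (k:ℝ) * Real.exp (-γ * t)) atTop (nhds 0) :=
      tendsto_rpow_mul_exp_neg_mul_atTop_nhds_zero k γ hγ
    have h2 : Tendsto (fun t : ℝ => Real.exp (-γ * t) * t ^ k) atTop (nhds 0) := by
      refine h1.congr' ?_
      filter_upwards [eventually_gt_atTop (0:ℝ)] with t ht
      rw [Real.rpow_natCast, mul_comm]
    simpa using h2.smul_const (b k)
  simp only [Finset.sum_const_zero] at this
  refine this.congr fun t => ?_
  rw [Finset.smul_sum]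
  exact Finset.sum_congr rfl fun k _ => (smul_smul _ _ _).symm

/-- extend a polynomial sum to a longer range using truncated coefficients -/
lemma poly_sum_ext {X : Type*} [AddCommMonoid X] [Module ℝ X]
    (d n : ℕ) (a : ℕ → X) (h : d + 1 ≤ n) (t : ℝ) :
    ∑ k ∈ Finset.range (d+1), t ^ k • a k
      = ∑ k ∈ Finset.range n, t ^ k • (if k ≤ d then a k else 0) := by
  have h1 : (∑ k ∈ Finset.range (d+1), t ^ k • a k)
      = ∑ k ∈ Finset.range (d+1), t ^ k • (if k ≤ d then a k else 0) :=
    Finset.sum_congr rfl fun k hk => by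
      rw [if_pos (Nat.lt_succ_iff.mp (Finset.mem_range.mp hk))]
  rw [h1]
  refine Finset.sum_subset (Finset.range_subset_range.mpr h) fun k _ hk => ?_
  have hkd : ¬ k ≤ d := by simp only [Finset.mem_range] at hk; omega
  rw [if_neg hkd, smul_zero]

/-- Foias–Saut type approximation lemma: if `y' - γ y = p + g` with `p` a polynomial
and `‖g(t)‖ ≤ M e^{-δ t}`, and `e^{-γ t} ‖y(t)‖ → 0`, then there is a unique
polynomial `q` with `‖y(t) - q(t)‖ ≤ (M/(γ+δ)) e^{-δ t}` for `t ≥ t*`. -/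
theorem poly_approximation_lemma
    {X : Type*} [NormedAddCommGroup X] [NormedSpace ℝ X] [CompleteSpace X]
    (γ tstar M δ : ℝ) (hγ : 0 < γ) (htstar : 0 ≤ tstar) (hM : 0 < M) (hδ : 0 < δ)
    (p g y : ℝ → X) (hp : IsPolyFun p)
    (hgc : ContinuousOn g (Set.Ici tstar))
    (hg : ∀ t ≥ tstar, ‖g t‖ ≤ M * Real.exp (-δ * t))
    (hyc : ContinuousOn y (Set.Ici tstar))
    (hode : ∀ t > tstar, HasDerivAt y (γ • y t + p t + g t) t)
    (hdecay : Filter.Tendsto (fun t => Real.exp (-γ * t) * ‖y t‖) Filter.atTop (nhds 0)) :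
    ∃ q : ℝ → X, IsPolyFun q ∧
      (∀ t ≥ tstar, ‖y t - q t‖ ≤ M / (γ + δ) * Real.exp (-δ * t)) ∧
      ∀ q' : ℝ → X, IsPolyFun q' →
        (∀ t ≥ tstar, ‖y t - q' t‖ ≤ M / (γ + δ) * Real.exp (-δ * t)) →
        ∀ t : ℝ, q' t = q t := by
  obtain ⟨d, a, hpa⟩ := hp
  have hγ' : γ ≠ 0 := ne_of_gt hγ
  set A : ℕ → X := fun k => if k ≤ d then a k else 0 with hA
  have hAzero : ∀ k, d < k → A k = 0 := fun k hk => by simp [hA, Nat.not_le.mpr hk]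
  have hpA : ∀ t : ℝ, p t = ∑ k ∈ Finset.range (d+1), t ^ k • A k := by
    intro t
    rw [hpa t]
    exact Finset.sum_congr rfl fun k hk => by
      rw [hA]; simp only [if_pos (Nat.lt_succ_iff.mp (Finset.mem_range.mp hk))]
  set b : ℕ → X := fun k =>
    -∑ j ∈ Finset.range (d+1), (((k+j).descFactorial j : ℝ) / γ^(j+1)) • A (k+j) with hb
  -- the recursion for coefficients
  have hrec : ∀ k : ℕ, ((k:ℝ)+1) • b (k+1) = γ • b k + A k := by
    intro k
    have hbk : γ • b k + A k
        = -∑ j ∈ Finset.range d, (γ * (((k+(j+1)).descFactorial (j+1) : ℝ) / γ^(j+2))) • A (k+(j+1)) := by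
      rw [hb]
      simp only [smul_neg, Finset.smul_sum, smul_smul]
      rw [Finset.sum_range_succ']
      have h0 : (γ * (((k+0).descFactorial 0 : ℝ) / γ^(0+1))) • A (k+0) = A k := by
        simp only [Nat.add_zero, Nat.descFactorial_zero, Nat.cast_one, pow_zero, pow_one,
          one_div]
        norm_num [mul_inv_cancel₀ hγ']
      rw [neg_add, h0, add_assoc, neg_add_cancel, add_zero]
    have hbk1 : ((k:ℝ)+1) • b (k+1)
        = -∑ j ∈ Finset.range d, (((k:ℝ)+1) * (((k+1+j).descFactorial j : ℝ) / γ^(j+1))) • A (k+1+j) := by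
      rw [hb]
      simp only [smul_neg, Finset.smul_sum, smul_smul]
      rw [Finset.sum_range_succ]
      rw [hAzero (k+1+d) (by omega), smul_zero, add_zero]
    rw [hbk, hbk1]
    congr 1
    refine Finset.sum_congr rfl fun j hj => ?_
    have hidx : k + (j+1) = k + 1 + j := by omega
    rw [hidx]
    congr 1
    have hdF : ((k+1+j).descFactorial (j+1) : ℝ) = ((k:ℝ)+1) * ((k+1+j).descFactorial j : ℝ) := by
      rw [Nat.descFactorial_succ]
      push_cast
      have : k + 1 + j - j = k + 1 := by omega
      rw [this]
      push_cast
      ring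
    rw [hdF, pow_succ]
    field_simp
    ring
  have hbtop : b (d+1) = 0 := by
    rw [hb]
    simp only
    rw [neg_eq_zero]
    refine Finset.sum_eq_zero fun j _ => ?_
    rw [hAzero (d+1+j) (by omega), smul_zero]
  set q : ℝ → X := fun t => ∑ k ∈ Finset.range (d+1), t ^ k • b k with hq
  have hqpoly : IsPolyFun q := ⟨d, b, fun t => rfl⟩
  have hqcont : Continuous q :=
    continuous_finset_sum _ fun k _ => (continuous_pow k).smul continuous_const
  -- q solves q' = γ q + p
  have hqderiv : ∀ t : ℝ, HasDerivAt q (γ • q t + p t) t := by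
    intro t
    have h1 : HasDerivAt q (∑ k ∈ Finset.range (d+1), ((k:ℝ) * t ^ (k-1)) • b k) t := by
      convert HasDerivAt.sum (u := Finset.range (d+1)) fun k _ => (hasDerivAt_pow k t).smul_const (b k) using 1
      ext u; rw [Finset.sum_apply]
    convert h1 using 1
    rw [hpA t, hq]
    simp only
    rw [Finset.smul_sum, ← Finset.sum_add_distrib]
    have hRHS : ∑ k ∈ Finset.range (d+1), (γ • (t ^ k • b k) + t ^ k • A k)
        = ∑ k ∈ Finset.range (d+1), t ^ k • (((k:ℝ)+1) • b (k+1)) := by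
      refine Finset.sum_congr rfl fun k _ => ?_
      rw [hrec k, smul_add, smul_comm (t^k) γ (b k)]
    rw [hRHS]
    rw [Finset.sum_range_succ, hbtop, smul_zero, smul_zero, add_zero]
    rw [Finset.sum_range_succ' (fun k => ((k:ℝ) * t ^ (k-1)) • b k) d]
    simp only [Nat.cast_zero, zero_mul, zero_smul, add_zero]
    refine Finset.sum_congr rfl fun k _ => ?_
    rw [smul_smul]
    congr 1
    push_cast
    ring
  -- the function w = e^{-γ t} (y - q)
  set w : ℝ → X := fun s => Real.exp (-γ * s) • (y s - q s) with hw
  have hwderiv : ∀ s, tstar < s → HasDerivAt w (Real.exp (-γ * s) • g s) s := by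
    intro s hs
    have he : HasDerivAt (fun u : ℝ => Real.exp (-γ * u)) (Real.exp (-γ * s) * (-γ * 1)) s :=
      ((hasDerivAt_id s).const_mul (-γ)).exp
    have hyq : HasDerivAt (fun u => y u - q u)
        ((γ • y s + p s + g s) - (γ • q s + p s)) s := (hode s hs).sub (hqderiv s)
    have := he.smul hyq
    convert this using 1
    · rfl
    module
  have hwcont : ContinuousOn w (Set.Ici tstar) :=
    ((Real.continuous_exp.comp (continuous_const.mul continuous_id)).continuousOn).smul
      (hyc.sub hqcont.continuousOn)
  have hwlim : Tendsto w atTop (nhds 0) := by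
    have h1 : Tendsto (fun s : ℝ => Real.exp (-γ * s) • y s) atTop (nhds 0) := by
      refine squeeze_zero_norm (fun s => ?_) hdecay
      rw [norm_smul, Real.norm_eq_abs, abs_of_pos (Real.exp_pos _)]
    have h2 : Tendsto (fun s : ℝ => Real.exp (-γ * s) • q s) atTop (nhds 0) :=
      tendsto_exp_smul_poly γ hγ (d+1) b
    have := h1.sub h2
    rw [sub_zero] at this
    refine this.congr fun s => ?_
    rw [hw]; simp only [smul_sub]
  set c : ℝ := γ + δ with hcdef
  have hc : 0 < c := by positivity
  have hc' : c ≠ 0 := ne_of_gt hc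
  -- integral bound
  have hwbound : ∀ t ≥ tstar, ‖w t‖ ≤ M / c * Real.exp (-c * t) := by
    intro t ht
    have key : ∀ T, t ≤ T →
        ‖w t‖ ≤ ‖w T‖ + M / c * (Real.exp (-c * t) - Real.exp (-c * T)) := by
      intro T hT
      have hftc : ∫ s in t..T, Real.exp (-γ * s) • g s = w T - w t := by
        refine intervalIntegral.integral_eq_sub_of_hasDeriv_right_of_le hT
          (hwcont.mono fun x hx => le_trans ht hx.1) (fun x hx =>
            (hwderiv x (lt_of_le_of_lt ht hx.1)).hasDerivWithinAt) ?_
        refine ContinuousOn.intervalIntegrable ?_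
        rw [Set.uIcc_of_le hT]
        exact ((Real.continuous_exp.comp (continuous_const.mul continuous_id)).continuousOn).smul
          (hgc.mono fun x hx => le_trans ht hx.1)
      have hintexp : ∫ s in t..T, M * Real.exp (-c * s)
          = M / c * (Real.exp (-c * t) - Real.exp (-c * T)) := by
        have hF : ∀ s ∈ Set.uIcc t T, HasDerivAt (fun u => -(M/c) * Real.exp (-c * u))
            (M * Real.exp (-c * s)) s := by
          intro s _
          have : HasDerivAt (fun u => -(M/c) * Real.exp (-c * u))
              (-(M/c) * (Real.exp (-c * s) * (-c * 1))) s :=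
            (((hasDerivAt_id s).const_mul (-c)).exp).const_mul (-(M/c))
          convert this using 1
          field_simp
        rw [intervalIntegral.integral_eq_sub_of_hasDerivAt hF
          (((continuous_const.mul (Real.continuous_exp.comp
            (continuous_const.mul continuous_id)))).continuousOn.intervalIntegrable)]
        ring
      have hnormint : ‖w T - w t‖ ≤ M / c * (Real.exp (-c * t) - Real.exp (-c * T)) := by
        rw [← hftc, ← hintexp]
        refine le_trans (intervalIntegral.norm_integral_le_integral_norm hT) ?_
        refine intervalIntegral.integral_mono_on hT ?_ ?_ ?_
        · refine ContinuousOn.intervalIntegrable ?_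
          rw [Set.uIcc_of_le hT]
          exact (((Real.continuous_exp.comp (continuous_const.mul continuous_id)).continuousOn).smul
            (hgc.mono fun x hx => le_trans ht hx.1)).norm
        · exact ((continuous_const.mul (Real.continuous_exp.comp
            (continuous_const.mul continuous_id)))).continuousOn.intervalIntegrable
        · intro s hs
          rw [norm_smul, Real.norm_eq_abs, abs_of_pos (Real.exp_pos _)]
          calc Real.exp (-γ * s) * ‖g s‖ ≤ Real.exp (-γ * s) * (M * Real.exp (-δ * s)) := by
                exact mul_le_mul_of_nonneg_left (hg s (le_trans ht hs.1)) (le_of_lt (Real.exp_pos _))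
            _ = M * Real.exp (-c * s) := by
                rw [hcdef, mul_left_comm, ← Real.exp_add]
                congr 1
                ring
      calc ‖w t‖ = ‖w T - (w T - w t)‖ := by rw [sub_sub_cancel]
        _ ≤ ‖w T‖ + ‖w T - w t‖ := norm_sub_le _ _
        _ ≤ ‖w T‖ + M / c * (Real.exp (-c * t) - Real.exp (-c * T)) := by
            linarith [hnormint]
    have hTlim : Tendsto (fun T => ‖w T‖ + M / c * (Real.exp (-c * t) - Real.exp (-c * T)))
        atTop (nhds (0 + M / c * (Real.exp (-c * t) - 0))) := by
      refine Tendsto.add (by simpa using hwlim.norm : Tendsto (fun T => ‖w T‖) atTop (nhds 0)) ?_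
      refine Tendsto.const_mul _ (Tendsto.sub tendsto_const_nhds ?_)
      have : Tendsto (fun T : ℝ => Real.exp (-(c * T))) atTop (nhds 0) :=
        tendsto_exp_neg_atTop_nhds_zero.comp (tendsto_id.const_mul_atTop hc)
      exact this.congr fun T => by rw [neg_mul]
    have := ge_of_tendsto hTlim (eventually_atTop.mpr ⟨t, fun T hT => key T hT⟩)
    simpa using this
  have hqbnd : ∀ t ≥ tstar, ‖y t - q t‖ ≤ M / (γ + δ) * Real.exp (-δ * t) := by
    intro t ht
    have h1 : Real.exp (γ * t) * ‖w t‖ = ‖y t - q t‖ := by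
      rw [hw]
      rw [norm_smul, Real.norm_eq_abs, abs_of_pos (Real.exp_pos _), ← mul_assoc,
        ← Real.exp_add]
      norm_num
    rw [← h1]
    calc Real.exp (γ * t) * ‖w t‖ ≤ Real.exp (γ * t) * (M / c * Real.exp (-c * t)) :=
          mul_le_mul_of_nonneg_left (hwbound t ht) (le_of_lt (Real.exp_pos _))
      _ = M / (γ + δ) * Real.exp (-δ * t) := by
          rw [hcdef, mul_comm (Real.exp _), mul_assoc, ← Real.exp_add]
          ring_nf
  refine ⟨q, hqpoly, hqbnd, ?_⟩
  intro q' hq' hbound'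
  obtain ⟨d', a', hpa'⟩ := hq'
  set N : ℕ := max d d' + 1 with hN
  set cdiff : ℕ → X := fun k => (if k ≤ d' then a' k else 0) - (if k ≤ d then b k else 0)
    with hcdiff
  have hdiff : ∀ t : ℝ, q' t - q t = ∑ k ∈ Finset.range N, t ^ k • cdiff k := by
    intro t
    rw [hpa' t, hq]
    simp only
    rw [poly_sum_ext d' N a' (by omega) t, poly_sum_ext d N b (by omega) t,
      ← Finset.sum_sub_distrib]
    exact Finset.sum_congr rfl fun k _ => by rw [hcdiff, smul_sub]
  have hbound : ∀ t ≥ tstar, ‖q' t - q t‖ ≤ 2 * (M / (γ + δ)) * Real.exp (-δ * t) := by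
    intro t ht
    have habel : (y t - q' t) - (y t - q t) = q t - q' t := by abel
    calc ‖q' t - q t‖ = ‖(y t - q' t) - (y t - q t)‖ := by
          rw [habel, norm_sub_rev]
      _ ≤ ‖y t - q' t‖ + ‖y t - q t‖ := norm_sub_le _ _
      _ ≤ M / (γ + δ) * Real.exp (-δ * t) + M / (γ + δ) * Real.exp (-δ * t) := by
          have hq1 := hbound' t ht
          have hq2 := hqbnd t ht
          linarith
      _ = 2 * (M / (γ + δ)) * Real.exp (-δ * t) := by ring
  have htend : Tendsto (fun t : ℝ => ∑ k ∈ Finset.range N, t ^ k • cdiff k)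
      atTop (nhds 0) := by
    refine squeeze_zero_norm' (a := fun t : ℝ => 2 * (M / (γ + δ)) * Real.exp (-δ * t)) ?_ ?_
    · filter_upwards [eventually_ge_atTop tstar] with t ht
      rw [← hdiff t]
      exact hbound t ht
    · have : Tendsto (fun t : ℝ => Real.exp (-(δ * t))) atTop (nhds 0) :=
        tendsto_exp_neg_atTop_nhds_zero.comp (tendsto_id.const_mul_atTop hδ)
      have h2 : Tendsto (fun t : ℝ => 2 * (M / (γ + δ)) * Real.exp (-δ * t)) atTop
          (nhds (2 * (M / (γ + δ)) * 0)) := by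
        refine Tendsto.const_mul _ (this.congr fun t => by rw [neg_mul])
      simpa using h2
  have hzero := coeff_zero_of_tendsto N cdiff htend
  intro t
  have : q' t - q t = 0 := by
    rw [hdiff t]
    refine Finset.sum_eq_zero fun k hk => ?_
    rw [hzero k (Finset.mem_range.mp hk), smul_zero]
  exact sub_eq_zero.mp this
end

section
/- For any γ > 0 and any polynomial p : ℝ → X with values in a Banach space X, the function q(t) = −∫_t^∞ e^{γ(t−τ)} p(τ) dτ is well-defined, is a polynomial of the same degree as p, and is the unique polynomial solution of q'(t) − γ q(t) = p(t) for all t ∈ ℝ. -/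
open MeasureTheory Real Set Filter Topology
open MeasureTheory Real Set Filter Topology

/-- scalar integrability of `x^k * exp(-γ x)` on `Ioi t` -/
lemma aux_int_scalar (γ : ℝ) (hγ : 0 < γ) (k : ℕ) (t : ℝ) :
    MeasureTheory.IntegrableOn (fun τ : ℝ => τ ^ k * Real.exp (-γ * τ)) (Set.Ioi t) := by
  apply integrable_of_isBigO_exp_neg (half_pos hγ)
    ((continuous_pow k).mul (by fun_prop)).continuousOn
  have h1 : Tendsto (fun x : ℝ => x ^ k * Real.exp (-(γ/2) * x)) atTop (𝓝 0) := by
    refine (tendsto_rpow_mul_exp_neg_mul_atTop_nhds_zero k (γ/2) (half_pos hγ)).congr' ?_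
    filter_upwards [eventually_gt_atTop (0:ℝ)] with x hx
    rw [Real.rpow_natCast]
  rw [Asymptotics.isBigO_iff]
  refine ⟨1, ?_⟩
  have h2 : ∀ᶠ x : ℝ in atTop, x ^ k * Real.exp (-(γ/2) * x) ≤ 1 :=
    h1.eventually (eventually_le_nhds one_pos)
  filter_upwards [h2, eventually_ge_atTop (0:ℝ)] with x hx hx0
  have he : Real.exp (-γ * x) = Real.exp (-(γ/2) * x) * Real.exp (-(γ/2) * x) := by
    rw [← Real.exp_add]; ring_nf
  simp only [Pi.mul_apply]
  rw [Real.norm_eq_abs, Real.norm_eq_abs, he, ← mul_assoc,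
    abs_of_nonneg (by positivity), abs_of_nonneg (Real.exp_pos _).le, one_mul]
  exact mul_le_of_le_one_left (Real.exp_pos _).le hx

/-- comparison lemma: two solutions of `f' = γ f + p` with decaying `e^{-γt} f` agree -/
lemma aux_unique {X : Type*} [NormedAddCommGroup X] [NormedSpace ℝ X]
    (γ : ℝ) (hγ : 0 < γ) (p f h : ℝ → X)
    (hf : ∀ t : ℝ, HasDerivAt f (γ • f t + p t) t)
    (hh : ∀ t : ℝ, HasDerivAt h (γ • h t + p t) t)
    (hft : Tendsto (fun t => Real.exp (-γ * t) • f t) atTop (𝓝 0))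
    (hht : Tendsto (fun t => Real.exp (-γ * t) • h t) atTop (𝓝 0)) :
    ∀ t : ℝ, f t = h t := by
  set D : ℝ → X := fun t => Real.exp (-γ * t) • (f t - h t) with hD
  have hDd : ∀ t : ℝ, HasDerivAt D 0 t := by
    intro t
    have he : HasDerivAt (fun t : ℝ => Real.exp (-γ * t)) (-γ * Real.exp (-γ * t)) t := by
      simpa [mul_comm] using ((hasDerivAt_id t).const_mul (-γ)).exp
    have hsub : HasDerivAt (fun t => f t - h t) (γ • (f t - h t)) t := by
      exact ((hf t).sub (hh t)).congr_deriv (by module)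
    have := he.smul hsub
    convert this using 1
    · funext s; rfl
    simp only [smul_smul, smul_sub]
    module
  have hconst : ∀ s t : ℝ, D s = D t :=
    is_const_of_deriv_eq_zero (fun t => (hDd t).differentiableAt) (fun t => (hDd t).deriv)
  have hDt : Tendsto D atTop (𝓝 0) := by
    have := hft.sub hht
    simpa [hD, smul_sub] using this
  intro t
  have h0 : D t = 0 := by
    have : Tendsto (fun _ : ℝ => D t) atTop (𝓝 0) := hDt.congr fun s => hconst s t
    exact tendsto_nhds_unique this tendsto_const_nhds |>.symm ▸ rfl
  have := h0
  rw [hD] at this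
  simp only [smul_eq_zero, sub_eq_zero] at this
  rcases this with h1 | h1
  · exact absurd h1 (Real.exp_ne_zero _)
  · exact h1

/-- polynomial tail decay -/
lemma aux_poly_tail {X : Type*} [NormedAddCommGroup X] [NormedSpace ℝ X]
    (γ : ℝ) (hγ : 0 < γ) (n : ℕ) (c : ℕ → X) :
    Tendsto (fun t : ℝ => Real.exp (-γ * t) • ∑ k ∈ Finset.range (n + 1), t ^ k • c k)
      atTop (𝓝 0) := by
  have : ∀ t : ℝ, Real.exp (-γ * t) • ∑ k ∈ Finset.range (n + 1), t ^ k • c k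
      = ∑ k ∈ Finset.range (n + 1), (t ^ k * Real.exp (-γ * t)) • c k := by
    intro t
    rw [Finset.smul_sum]
    exact Finset.sum_congr rfl fun k _ => by rw [smul_smul, mul_comm]
  simp only [this]
  have h0 : Tendsto (fun _ : ℝ => (0:X)) atTop (𝓝 0) := tendsto_const_nhds
  have : Tendsto (fun t : ℝ => ∑ k ∈ Finset.range (n + 1),
      (t ^ k * Real.exp (-γ * t)) • c k) atTop (𝓝 (∑ k ∈ Finset.range (n+1), (0:X))) := by
    apply tendsto_finset_sum
    intro k _
    have h1 : Tendsto (fun x : ℝ => x ^ k * Real.exp (-γ * x)) atTop (𝓝 0) := by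
      refine (tendsto_rpow_mul_exp_neg_mul_atTop_nhds_zero k γ hγ).congr' ?_
      filter_upwards [eventually_gt_atTop (0:ℝ)] with x hx
      rw [Real.rpow_natCast]
    simpa using h1.smul_const (c k)
  simpa using this

noncomputable def auxB {X : Type*} [NormedAddCommGroup X] [NormedSpace ℝ X]
    (γ : ℝ) (d : ℕ) (a : ℕ → X) (k : ℕ) : X :=
  -∑ j ∈ Finset.Icc k d, (((j.factorial : ℝ) / (k.factorial : ℝ)) * γ⁻¹ ^ (j + 1 - k)) • a j

lemma auxB_top {X : Type*} [NormedAddCommGroup X] [NormedSpace ℝ X]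
    (γ : ℝ) (d : ℕ) (a : ℕ → X) : auxB γ d a (d+1) = 0 := by
  simp [auxB, Finset.Icc_eq_empty (by omega : ¬ (d+1) ≤ d)]

lemma auxB_d {X : Type*} [NormedAddCommGroup X] [NormedSpace ℝ X]
    (γ : ℝ) (d : ℕ) (a : ℕ → X) : auxB γ d a d = -(γ⁻¹ • a d) := by
  have h : ((d.factorial : ℝ) / (d.factorial : ℝ)) = 1 := div_self (by positivity)
  simp [auxB, Finset.Icc_self, h]

lemma auxB_rec {X : Type*} [NormedAddCommGroup X] [NormedSpace ℝ X]
    (γ : ℝ) (hγ : 0 < γ) (d : ℕ) (a : ℕ → X) (k : ℕ) (hk : k ≤ d) :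
    γ • auxB γ d a k + a k = ((k : ℝ) + 1) • auxB γ d a (k+1) := by
  have hsplit : Finset.Icc k d = insert k (Finset.Icc (k+1) d) := by
    rw [Finset.Icc_add_one_left_eq_Ioc, Finset.Ioc_insert_left hk]
  have hmem : k ∉ Finset.Icc (k+1) d := by simp
  have hcoef : ((k.factorial : ℝ) / (k.factorial : ℝ)) * γ⁻¹ ^ (k + 1 - k) = γ⁻¹ := by
    rw [div_self (by positivity), Nat.add_sub_cancel_left]; simp
  have hterm : ∀ j ∈ Finset.Icc (k+1) d,
      (γ * (((j.factorial : ℝ) / (k.factorial : ℝ)) * γ⁻¹ ^ (j + 1 - k))) • a j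
        = ((((k:ℝ)+1) * (((j.factorial : ℝ) / ((k+1).factorial : ℝ)) * γ⁻¹ ^ (j + 1 - (k+1)))) • a j) := by
    intro j hj
    simp only [Finset.mem_Icc] at hj
    congr 1
    have h1 : j + 1 - k = (j - k) + 1 := by omega
    have h2 : j + 1 - (k + 1) = j - k := by omega
    rw [h1, h2, pow_succ, Nat.factorial_succ]
    have hkf : (k.factorial : ℝ) ≠ 0 := by positivity
    push_cast
    field_simp
  rw [auxB, auxB, hsplit, Finset.sum_insert hmem, hcoef]
  simp only [smul_neg, smul_add, Finset.smul_sum, smul_smul, mul_inv_cancel₀ hγ.ne', one_smul]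
  rw [Finset.sum_congr rfl hterm]
  abel
lemma auxR_deriv {X : Type*} [NormedAddCommGroup X] [NormedSpace ℝ X]
    (γ : ℝ) (hγ : 0 < γ) (d : ℕ) (a : ℕ → X) (t : ℝ) :
    HasDerivAt (fun t : ℝ => ∑ k ∈ Finset.range (d+1), t ^ k • auxB γ d a k)
      (γ • (∑ k ∈ Finset.range (d+1), t ^ k • auxB γ d a k)
        + ∑ k ∈ Finset.range (d+1), t ^ k • a k) t := by
  have hder : HasDerivAt (fun t : ℝ => ∑ k ∈ Finset.range (d+1), t ^ k • auxB γ d a k)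
      (∑ k ∈ Finset.range (d+1), (((k:ℕ):ℝ) * t ^ (k-1)) • auxB γ d a k) t :=
    HasDerivAt.fun_sum fun k _ => (hasDerivAt_pow k t).smul_const _
  have heq : γ • (∑ k ∈ Finset.range (d+1), t ^ k • auxB γ d a k)
      + ∑ k ∈ Finset.range (d+1), t ^ k • a k
      = ∑ k ∈ Finset.range (d+1), (((k:ℕ):ℝ) * t ^ (k-1)) • auxB γ d a k := by
    rw [Finset.smul_sum, ← Finset.sum_add_distrib]
    have h1 : ∀ k ∈ Finset.range (d+1), γ • (t^k • auxB γ d a k) + t^k • a k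
        = (((k:ℝ)+1) * t^k) • auxB γ d a (k+1) := by
      intro k hk
      rw [Finset.mem_range] at hk
      calc γ • (t^k • auxB γ d a k) + t^k • a k
          = t^k • (γ • auxB γ d a k + a k) := by rw [smul_add, smul_comm]
        _ = t^k • (((k:ℝ)+1) • auxB γ d a (k+1)) := by
            rw [auxB_rec γ hγ d a k (by omega)]
        _ = (((k:ℝ)+1) * t^k) • auxB γ d a (k+1) := by rw [smul_smul, mul_comm]
    rw [Finset.sum_congr rfl h1, Finset.sum_range_succ, auxB_top, smul_zero, add_zero,
      Finset.sum_range_succ']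
    simp only [Nat.cast_zero, zero_mul, zero_smul, add_zero]
    refine Finset.sum_congr rfl fun k _ => ?_
    push_cast
    simp [Nat.add_sub_cancel]
  exact heq ▸ hder

/-- The polynomial solution to `q' - γ q = p`: existence, same degree, uniqueness,
given by `q(t) = -∫_t^∞ e^{γ(t-τ)} p(τ) dτ`. -/
theorem poly_solution_integral_formula
    {X : Type*} [NormedAddCommGroup X] [NormedSpace ℝ X] [CompleteSpace X]
    (γ : ℝ) (hγ : 0 < γ) (d : ℕ) (a : ℕ → X) (had : a d ≠ 0)
    (p : ℝ → X) (hp : ∀ t : ℝ, p t = ∑ k ∈ Finset.range (d + 1), t ^ k • a k)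
    (q : ℝ → X)
    (hq : ∀ t : ℝ, q t = -∫ τ in Set.Ioi t, Real.exp (γ * (t - τ)) • p τ) :
    (∀ t : ℝ, MeasureTheory.IntegrableOn (fun τ => Real.exp (γ * (t - τ)) • p τ)
        (Set.Ioi t)) ∧
    (∃ b : ℕ → X, b d ≠ 0 ∧ ∀ t : ℝ, q t = ∑ k ∈ Finset.range (d + 1), t ^ k • b k) ∧
    (∀ t : ℝ, HasDerivAt q (γ • q t + p t) t) ∧
    (∀ r : ℝ → X, (∃ (d' : ℕ) (c : ℕ → X),
        ∀ t : ℝ, r t = ∑ k ∈ Finset.range (d' + 1), t ^ k • c k) →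
      (∀ t : ℝ, HasDerivAt r (γ • r t + p t) t) → ∀ t : ℝ, r t = q t) := by
  have hpc : Continuous p := by
    rw [funext hp]
    exact continuous_finset_sum _ fun k _ => (continuous_pow k).smul continuous_const
  set g : ℝ → X := fun τ => Real.exp (-γ * τ) • p τ with hg
  have hgc : Continuous g := ((Real.continuous_exp.comp (by fun_prop)).smul hpc : _)
  have hgint : ∀ t : ℝ, IntegrableOn g (Ioi t) := by
    intro t
    have h1 : ∀ τ : ℝ, g τ = ∑ k ∈ Finset.range (d+1), (τ ^ k * Real.exp (-γ * τ)) • a k := by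
      intro τ
      show Real.exp (-γ * τ) • p τ = _
      rw [hp τ, Finset.smul_sum]
      exact Finset.sum_congr rfl fun k _ => by rw [smul_smul, mul_comm]
    rw [funext h1]
    exact integrable_finset_sum _ fun k _ => ((aux_int_scalar γ hγ k t).smul_const (a k))
  have hiden : ∀ t : ℝ, (fun τ => Real.exp (γ * (t - τ)) • p τ)
      = fun τ => Real.exp (γ * t) • g τ := by
    intro t; funext τ
    show _ = Real.exp (γ * t) • (Real.exp (-γ * τ) • p τ)
    rw [smul_smul, ← Real.exp_add]
    ring_nf
  have hint1 : ∀ t : ℝ, IntegrableOn (fun τ => Real.exp (γ * (t - τ)) • p τ) (Ioi t) := by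
    intro t; rw [hiden t]
    exact (hgint t).smul (Real.exp (γ * t))
  set F : ℝ → X := fun t => ∫ τ in Ioi t, g τ with hF
  have hqF : ∀ t, q t = -(Real.exp (γ * t) • F t) := by
    intro t; rw [hq t, hiden t, integral_smul]
  have hFsub : ∀ s t : ℝ, s ≤ t → F s = (∫ τ in s..t, g τ) + F t := by
    intro s t hst
    rw [hF, intervalIntegral.integral_of_le hst,
      ← setIntegral_union (Ioc_disjoint_Ioi le_rfl) measurableSet_Ioi
        ((hgint s).mono_set Ioc_subset_Ioi_self) (hgint t),
      Ioc_union_Ioi_eq_Ioi hst]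
  have hFeq : ∀ t : ℝ, F t = F 0 - ∫ τ in (0:ℝ)..t, g τ := by
    intro t
    rcases le_total 0 t with h | h
    · rw [hFsub 0 t h]; abel
    · rw [hFsub t 0 h, intervalIntegral.integral_symm]; abel
  have hFd : ∀ t : ℝ, HasDerivAt F (-(g t)) t := by
    intro t
    have h1 : HasDerivAt (fun u => ∫ τ in (0:ℝ)..u, g τ) (g t) t :=
      intervalIntegral.integral_hasDerivAt_right (hgc.intervalIntegrable 0 t)
        (hgc.stronglyMeasurableAtFilter volume (𝓝 t)) hgc.continuousAt
    have h2 := h1.const_sub (F 0)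
    have h3 : F = fun t => F 0 - ∫ τ in (0:ℝ)..t, g τ := funext hFeq
    rw [h3]
    exact h2
  have hqd : ∀ t : ℝ, HasDerivAt q (γ • q t + p t) t := by
    intro t
    have hexp : HasDerivAt (fun t : ℝ => Real.exp (γ * t)) (γ * Real.exp (γ * t)) t := by
      simpa [mul_comm] using ((hasDerivAt_id t).const_mul γ).exp
    have h3 := (hexp.smul (hFd t)).neg
    have hqfun : q = fun t => -(Real.exp (γ * t) • F t) := funext hqF
    rw [hqfun]
    convert h3 using 1
    · funext s; rfl
    have hegp : Real.exp (γ * t) • g t = p t := by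
      show Real.exp (γ * t) • (Real.exp (-γ * t) • p t) = p t
      rw [smul_smul, ← Real.exp_add]
      ring_nf
      simp
    rw [← hegp]
    simp only [smul_neg, smul_smul, neg_add, smul_add]
    module
  have hqtail : Tendsto (fun t => Real.exp (-γ * t) • q t) atTop (𝓝 0) := by
    have hFt : Tendsto F atTop (𝓝 0) := by
      have h1 : Tendsto (fun t : ℝ => ∫ τ in (0:ℝ)..t, g τ) atTop (𝓝 (∫ τ in Ioi (0:ℝ), g τ)) :=
        intervalIntegral_tendsto_integral_Ioi 0 (hgint 0) tendsto_id
      have h2 := (tendsto_const_nhds (α := ℝ) (x := F 0)).sub h1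
      refine Tendsto.congr (fun t => (hFeq t).symm) ?_
      simpa [hF] using h2
    have heq : ∀ t : ℝ, Real.exp (-γ * t) • q t = -F t := by
      intro t
      rw [hqF t, smul_neg, smul_smul, ← Real.exp_add]
      ring_nf
      simp
    have h4 := hFt.neg
    rw [neg_zero] at h4
    exact h4.congr fun t => (heq t).symm
  refine ⟨hint1, ?_, hqd, ?_⟩
  · refine ⟨auxB γ d a, ?_, ?_⟩
    · rw [auxB_d]
      exact neg_ne_zero.mpr (smul_ne_zero (inv_ne_zero hγ.ne') had)
    · have hrd : ∀ t : ℝ, HasDerivAt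
          (fun t => ∑ k ∈ Finset.range (d+1), t ^ k • auxB γ d a k)
          (γ • (∑ k ∈ Finset.range (d+1), t ^ k • auxB γ d a k) + p t) t := by
        intro t
        rw [hp t]
        exact auxR_deriv γ hγ d a t
      exact aux_unique γ hγ p q _ hqd hrd hqtail (aux_poly_tail γ hγ d (auxB γ d a))
  · intro r hrpoly hrd
    obtain ⟨d', c, hr⟩ := hrpoly
    have hrt : Tendsto (fun t => Real.exp (-γ * t) • r t) atTop (𝓝 0) :=
      (aux_poly_tail γ hγ d' c).congr fun t => by rw [hr t]
    exact aux_unique γ hγ p r q hrd hqd hrt hqtail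
end
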